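/- arXiv:1503.08368 — 3 statements merged into one kernel-verified Lean document; each statement's English description precedes it below -/
import Mathlib

section
/- For all integers n ≥ 1 and a ≥ 1, every column of the a-handed riffle shuffle transition matrix P_a on S_n sums to 1; consequently the uniform distribution on S_n is a stationary distribution of the a-handed riffle shuffle chain: for every τ ∈ S_n, Σ_{σ ∈ S_n} (1/n!)·P_a(σ,τ) = 1/n!. -/
open Finset

/-- 0-indexed descent set of a deck arrangement: `i ∈ desSet n σ` iff the card at
position `i` is greater than the card at position `i+1` (positions `0, …, n-2`). -/
def desSet (n : ℕ) (σ : Equiv.Perm (Fin n)) : Finset ℕ :=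
  (Finset.range (n - 1)).filter
    (fun i => ∃ h : i + 1 < n, σ ⟨i + 1, h⟩ < σ ⟨i, Nat.lt_of_succ_lt h⟩)

/-- `des σ` is the number of descents of `σ`. -/
def des (n : ℕ) (σ : Equiv.Perm (Fin n)) : ℕ := (desSet n σ).card

/-- Bayer–Diaconis `a`-handed riffle shuffle transition matrix on `S_n`:
`Pa n a σ τ = C(n + a - 1 - des(τ⁻¹∘σ), n) / a^n`. -/
def Pa (n a : ℕ) : Matrix (Equiv.Perm (Fin n)) (Equiv.Perm (Fin n)) ℚ :=
  fun σ τ => ((n + a - 1 - des n (τ⁻¹ * σ)).choose n : ℚ) / (a : ℚ) ^ n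

/-!
Column sums of `Pa n a` are all equal to `a⁻ⁿ ∑_σ C(n + a - 1 - des σ, n)`, so it suffices to
show `∑_σ C(n + a - 1 - des σ, n) = aⁿ`. Sort each of the `aⁿ` words `w : Fin n → Fin a` stably;
the words whose sorting permutation is `σ` are exactly `y ∘ σ⁻¹` with `y` weakly increasing and
strictly increasing at the descents of `σ`. Adding to `y i` the number of non-descents below `i`
makes such `y` strictly increasing with values below `n + a - 1 - des σ`, and there are
`C(n + a - 1 - des σ, n)` of those.
-/

namespace Fin

lemma strictMono_iff_lt_add_one {α : Type*} [Preorder α] {n : ℕ} {f : Fin n → α} :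
    StrictMono f ↔ ∀ i (h : i + 1 < n), f ⟨i, by omega⟩ < f ⟨i + 1, h⟩ := by
  cases n with
  | zero => exact ⟨fun _ i h => by omega, fun _ => Subsingleton.strictMono f⟩
  | succ n =>
    rw [Fin.strictMono_iff_lt_succ]
    exact ⟨fun hf i h => hf ⟨i, by omega⟩, fun hf i => hf i i.succ.isLt⟩

variable {m n : ℕ} {f : Fin n → Fin m}

lemma le_val_of_strictMono (hf : StrictMono f) (i : Fin n) : (i : ℕ) ≤ f i := by
  calc (i : ℕ) = #(Iio i) := (card_Iio i).symm
    _ ≤ #(Iio (f i)) := card_le_card_of_injOn f (fun j hj => by simpa using hf (by simpa using hj))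
        hf.injective.injOn
    _ = f i := card_Iio (f i)

lemma val_add_le_of_strictMono (hf : StrictMono f) (i : Fin n) : (f i : ℕ) + (n - i) ≤ m := by
  have hrev : StrictMono (rev ∘ f ∘ rev) := fun j k hjk => rev_lt_rev.2 (hf (rev_lt_rev.2 hjk))
  have := le_val_of_strictMono hrev (rev i)
  simp only [Function.comp_apply, rev_rev, val_rev] at this
  omega

lemma card_strictMono (k m : ℕ) :
    Nat.card {f : Fin k → Fin m // StrictMono f} = m.choose k := by
  classical
  have e : {f : Fin k → Fin m // StrictMono f} ≃ {s : Finset (Fin m) // #s = k} :=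
    { toFun := fun f => ⟨univ.image f.1, by
        rw [card_image_of_injective _ f.2.injective, card_univ, Fintype.card_fin]⟩
      invFun := fun s => ⟨s.1.orderEmbOfFin s.2, (s.1.orderEmbOfFin s.2).strictMono⟩
      left_inv := fun f => Subtype.ext
        (orderEmbOfFin_unique _ (fun x => mem_image_of_mem _ (mem_univ x)) f.2).symm
      right_inv := fun s => Subtype.ext <| by
        rw [← coe_inj, coe_image, coe_univ, Set.image_univ, range_orderEmbOfFin] }
  rw [Nat.card_congr e, Nat.card_eq_fintype_card, Fintype.card_subtype, ← powerset_univ,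
    ← powersetCard_eq_filter, card_powersetCard, card_univ, Fintype.card_fin]

end Fin

lemma mem_desSet_iff {n : ℕ} (σ : Equiv.Perm (Fin n)) {i : ℕ} (h : i + 1 < n) :
    i ∈ desSet n σ ↔ σ ⟨i + 1, h⟩ < σ ⟨i, by omega⟩ := by
  simp only [desSet, mem_filter, mem_range]
  exact ⟨fun ⟨_, _, hlt⟩ => hlt, fun hlt => ⟨by omega, h, hlt⟩⟩

def MonotoneStrictAt {α : Type*} [Preorder α] {n : ℕ} (D : Finset ℕ) (y : Fin n → α) : Prop :=
  ∀ i (h : i + 1 < n), y ⟨i, by omega⟩ ≤ y ⟨i + 1, h⟩ ∧ (i ∈ D → y ⟨i, by omega⟩ < y ⟨i + 1, h⟩)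

lemma Tuple.sort_eq_iff_monotoneStrictAt {α : Type*} [LinearOrder α] {n : ℕ}
    (σ : Equiv.Perm (Fin n)) (w : Fin n → α) :
    Tuple.sort w = σ ↔ MonotoneStrictAt (desSet n σ) (w ∘ σ) := by
  rw [eq_comm, Tuple.eq_sort_iff']
  change StrictMono (fun k => toLex (w (σ k), σ k)) ↔ _
  rw [Fin.strictMono_iff_lt_add_one]
  refine forall₂_congr fun i h => ?_
  have hne : σ ⟨i, by omega⟩ ≠ σ ⟨i + 1, h⟩ := fun heq => by simpa using σ.injective heq
  simp only [Prod.Lex.toLex_lt_toLex, Function.comp_apply, mem_desSet_iff σ h]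
  grind

section NonDescents

variable (D : Finset ℕ)

lemma card_range_add_one_sdiff (i : ℕ) :
    #(range (i + 1) \ D) = #(range i \ D) + if i ∈ D then 0 else 1 := by
  rw [range_add_one]
  split_ifs with hi
  · rw [insert_sdiff_of_mem _ hi, add_zero]
  · rw [insert_sdiff_of_notMem _ hi, card_insert_of_notMem (by simp)]

lemma card_range_sdiff_le (i : ℕ) : #(range i \ D) ≤ i :=
  (card_le_card sdiff_subset).trans (card_range i).le

lemma le_card_range_sdiff_add (i : ℕ) : i ≤ #(range i \ D) + #D := by
  have := le_card_sdiff D (range i)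
  rw [card_range] at this
  omega

lemma card_range_sdiff_add_le {m i : ℕ} (hD : D ⊆ range m) (hi : i ≤ m) :
    #(range i \ D) + #D ≤ m := by
  rw [card_sdiff_add_card]
  exact (card_le_card (union_subset (range_subset_range.2 hi) hD)).trans (card_range m).le

end NonDescents

def monotoneStrictAtEquivStrictMono {n a : ℕ} {D : Finset ℕ} (hD : D ⊆ range (n - 1)) :
    {y : Fin n → Fin a // MonotoneStrictAt D y} ≃
      {z : Fin n → Fin (n + a - 1 - #D) // StrictMono z} where
  toFun y := ⟨fun i => ⟨y.1 i + #(range i \ D), by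
      have := card_range_sdiff_add_le D hD (i := i) (by omega)
      have := (y.1 i).isLt
      have := i.isLt
      omega⟩, by
    rw [Fin.strictMono_iff_lt_add_one]
    intro i h
    have := card_range_add_one_sdiff D i
    have hy := y.2 i h
    simp only [Fin.le_def, Fin.lt_def] at hy ⊢
    split_ifs at this with hi <;> grind⟩
  invFun z := ⟨fun i => ⟨z.1 i - #(range i \ D), by
      have := Fin.le_val_of_strictMono z.2 i
      have := Fin.val_add_le_of_strictMono z.2 i
      have := le_card_range_sdiff_add D i
      omega⟩, by
    intro i h
    have := card_range_add_one_sdiff D i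
    have := card_range_sdiff_le D i
    have := Fin.le_val_of_strictMono z.2 ⟨i, by omega⟩
    have := z.2 (show (⟨i, by omega⟩ : Fin n) < ⟨i + 1, h⟩ from Fin.mk_lt_mk.2 (by omega))
    simp only [Fin.mk_le_mk, Fin.lt_def] at this ⊢
    split_ifs at * <;> grind⟩
  left_inv y := by
    ext i : 2
    simp
  right_inv z := by
    ext i : 3
    exact Nat.sub_add_cancel ((card_range_sdiff_le D i).trans (Fin.le_val_of_strictMono z.2 i))

lemma card_monotoneStrictAt {n a : ℕ} {D : Finset ℕ} (hD : D ⊆ range (n - 1)) :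
    Nat.card {y : Fin n → Fin a // MonotoneStrictAt D y} = (n + a - 1 - #D).choose n := by
  rw [Nat.card_congr (monotoneStrictAtEquivStrictMono hD), Fin.card_strictMono]

theorem sum_choose_sub_des (n a : ℕ) :
    ∑ σ : Equiv.Perm (Fin n), (n + a - 1 - des n σ).choose n = a ^ n := by
  classical
  have hfiber (σ : Equiv.Perm (Fin n)) :
      #{w : Fin n → Fin a | Tuple.sort w = σ} = (n + a - 1 - des n σ).choose n := by
    rw [← Fintype.card_subtype, ← Nat.card_eq_fintype_card,
      Nat.card_congr ((Equiv.arrowCongr σ.symm (Equiv.refl _)).subtypeEquiv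
        fun w => Tuple.sort_eq_iff_monotoneStrictAt σ w),
      card_monotoneStrictAt (D := desSet n σ) (filter_subset _ _), des]
  simp_rw [← hfiber]
  rw [← card_eq_sum_card_fiberwise (fun w _ => mem_univ (Tuple.sort w)), card_univ,
    Fintype.card_fun, Fintype.card_fin, Fintype.card_fin]

lemma sum_Pa_eq_one {n a : ℕ} (ha : 0 < a) (τ : Equiv.Perm (Fin n)) :
    ∑ σ : Equiv.Perm (Fin n), Pa n a σ τ = 1 := by
  have hshift : ∑ σ : Equiv.Perm (Fin n), (n + a - 1 - des n (τ⁻¹ * σ)).choose n = a ^ n :=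
    (Equiv.sum_comp (Equiv.mulLeft τ⁻¹) fun σ => (n + a - 1 - des n σ).choose n).trans
      (sum_choose_sub_des n a)
  simp only [Pa, ← sum_div]
  rw [div_eq_one_iff_eq (by positivity)]
  exact_mod_cast hshift

theorem stmt1_general (n a : ℕ) (ha : 1 ≤ a) (τ : Equiv.Perm (Fin n)) :
    (∑ σ : Equiv.Perm (Fin n), Pa n a σ τ = 1) ∧
    (∑ σ : Equiv.Perm (Fin n), ((n.factorial : ℚ))⁻¹ * Pa n a σ τ =
      ((n.factorial : ℚ))⁻¹) := by
  have hcolumn := sum_Pa_eq_one ha τ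
  exact ⟨hcolumn, by rw [← mul_sum, hcolumn, mul_one]⟩

/-- Every column of the `a`-handed riffle shuffle transition matrix sums to 1;
consequently the uniform distribution is stationary. -/
theorem stmt1 (n a : ℕ) (hn : 1 ≤ n) (ha : 1 ≤ a) (τ : Equiv.Perm (Fin n)) :
    (∑ σ : Equiv.Perm (Fin n), Pa n a σ τ = 1) ∧
    (∑ σ : Equiv.Perm (Fin n), ((n.factorial : ℚ))⁻¹ * Pa n a σ τ =
      ((n.factorial : ℚ))⁻¹) :=
  stmt1_general n a ha τ
end

section
/- Let n ≥ 3, q ∈ [0,1], and let P_q be the top-or-bottom-to-random transition matrix on S_n. Define g : S_n → ℝ by g(σ) = Σ_{i ∈ Peak(σ)} C(n−3, i−1)·q^{i−1}·(1−q)^{n−2−i}. Then the function σ ↦ g(σ) − 1/3 is a right eigenfunction of P_q with eigenvalue (n−3)/n: for every σ ∈ S_n, Σ_{τ ∈ S_n} P_q(σ,τ)·(g(τ) − 1/3) = ((n−3)/n)·(g(σ) − 1/3). -/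
open Finset

/-- 0-indexed peak set: positions `i` with `σ(i) < σ(i+1) > σ(i+2)`. -/
def peakSet (n : ℕ) (σ : Equiv.Perm (Fin n)) : Finset ℕ :=
  (Finset.range (n - 2)).filter
    (fun i => ∃ h : i + 2 < n,
      σ ⟨i, Nat.lt_of_succ_lt (Nat.lt_of_succ_lt h)⟩ < σ ⟨i + 1, Nat.lt_of_succ_lt h⟩ ∧
      σ ⟨i + 2, h⟩ < σ ⟨i + 1, Nat.lt_of_succ_lt h⟩)

/-- `pk σ` is the number of peaks of `σ`. -/
def pk (n : ℕ) (σ : Equiv.Perm (Fin n)) : ℕ := (peakSet n σ).card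

/-- the cycle `e_i` (0-indexed): sends `j ↦ j-1` for `j > i`, `i ↦ n-1`, fixes `j < i`.
(`Fin.cycleRange i` is the cycle `c_i` (0-indexed): sends `j ↦ j+1` for `j < i`,
`i ↦ 0`, fixes `j > i`.) -/
def botCycle (n : ℕ) (i : Fin n) : Equiv.Perm (Fin n) :=
  Fin.revPerm * Fin.cycleRange i.rev * Fin.revPerm

/-- top-or-bottom-to-random transition matrix with parameter `q`:
with probability `q` remove the top card and reinsert it at a uniform position,
otherwise do the same with the bottom card. -/
noncomputable def Pq (n : ℕ) (q : ℝ) : Matrix (Equiv.Perm (Fin n)) (Equiv.Perm (Fin n)) ℝ :=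
  fun σ τ =>
    q / n * ((Finset.univ.filter (fun i : Fin n => τ = σ * Fin.cycleRange i)).card : ℝ) +
    (1 - q) / n * ((Finset.univ.filter (fun i : Fin n => τ = σ * botCycle n i)).card : ℝ)

/-- weighted peak statistic `g(σ) = Σ_{j ∈ Peak(σ)} C(n-3,j) q^j (1-q)^{n-3-j}`
(0-indexed version of `Σ_{i ∈ Peak(σ)} C(n-3,i-1) q^{i-1} (1-q)^{n-2-i}`). -/
noncomputable def gpk (n : ℕ) (q : ℝ) (σ : Equiv.Perm (Fin n)) : ℝ :=
  ∑ j ∈ peakSet n σ, ((n - 3).choose j : ℝ) * q ^ j * (1 - q) ^ (n - 3 - j)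

/-!
Write `g = ∑_{j ∈ Peak σ} b_j` with `b_j` the Bernstein weights of degree `N = n - 3`.
Inserting the top card at position `i` leaves the window `j, j+1, j+2` untouched when `i < j`,
shifts it by one when `i > j + 2`, and for the three remaining `i` places the old top card inside
the window; exactly one of these three placements puts the largest of the three values in the
middle. Averaging over `i` and using `q (N - j) b_j = (1 - q) (j + 1) b_{j+1}` gives
`q ∑_i g(σ c_i) = q + ∑_{j ∈ Peak σ} j b_j`. Bottom-to-random is top-to-random conjugated by
reversing the deck, which sends a peak at `j` to one at `N - j` and `b_j(q)` to `b_{N-j}(1 - q)`,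
so `(1 - q) ∑_i g(σ e_i) = (1 - q) + ∑_{j ∈ Peak σ} (N - j) b_j`. The two add up to `1 + N g(σ)`.
-/

open Polynomial Equiv

section Bernstein

variable {R : Type*} [CommRing R]

lemma bernsteinPolynomial_eval_one_sub {N j : ℕ} (h : j ≤ N) (q : R) :
    (bernsteinPolynomial R N j).eval (1 - q) = (bernsteinPolynomial R N (N - j)).eval q := by
  simpa using congrArg (eval q) (bernsteinPolynomial.flip (R := R) N j h)

lemma sum_bernsteinPolynomial_eval (N : ℕ) (q : R) :
    ∑ j ∈ range (N + 1), (bernsteinPolynomial R N j).eval q = 1 := by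
  simpa [eval_finsetSum] using congrArg (eval q) (bernsteinPolynomial.sum R N)

lemma mul_sub_mul_bernsteinPolynomial_eval (N j : ℕ) (q : R) :
    q * (N - j : ℕ) * (bernsteinPolynomial R N j).eval q =
      (1 - q) * (j + 1 : ℕ) * (bernsteinPolynomial R N (j + 1)).eval q := by
  rcases lt_or_ge j N with hj | hj
  · obtain ⟨k, rfl⟩ : ∃ k, N = j + 1 + k := ⟨N - j - 1, by omega⟩
    have hchoose : ((j + 1 + k).choose (j + 1) : R) * (j + 1) = (j + 1 + k).choose j * (k + 1) := by
      have h := Nat.choose_succ_right_eq (j + 1 + k) j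
      rw [show j + 1 + k - j = k + 1 by omega] at h
      exact_mod_cast congrArg (Nat.cast : ℕ → R) h
    simp only [bernsteinPolynomial, eval_mul, eval_natCast, eval_pow, eval_X, eval_sub, eval_one,
      show j + 1 + k - j = k + 1 by omega, show j + 1 + k - (j + 1) = k by omega]
    push_cast
    linear_combination (q ^ (j + 1) * (1 - q) ^ (k + 1)) * hchoose.symm
  · simp [Nat.sub_eq_zero_of_le hj, bernsteinPolynomial.eq_zero_of_lt R (Nat.lt_succ_of_le hj)]

lemma sum_mul_sub_mul_bernsteinPolynomial_eval (N : ℕ) (q : R) (f : ℕ → R) :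
    q * ∑ j ∈ range (N + 1), (N - j : ℕ) * (bernsteinPolynomial R N j).eval q * f (j + 1) =
      (1 - q) * ∑ j ∈ range (N + 1), j * (bernsteinPolynomial R N j).eval q * f j := by
  rw [sum_range_succ, sum_range_succ', Nat.sub_self]
  simp only [Nat.cast_zero, zero_mul, add_zero]
  rw [mul_sum, mul_sum]
  refine sum_congr rfl fun j _ => ?_
  linear_combination f (j + 1) * mul_sub_mul_bernsteinPolynomial_eval N j q

end Bernstein

lemma ite_max_three_eq_one {α : Type*} [LinearOrder α] {a b c : α} (hab : a ≠ b) (hac : a ≠ c)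
    (hbc : b ≠ c) :
    (if a < b ∧ c < b then (1 : ℝ) else 0) + (if b < a ∧ c < a then 1 else 0) +
      (if b < c ∧ a < c then 1 else 0) = 1 := by
  split_ifs <;> grind

lemma Fin.cycleRange_mk_of_lt {n a b : ℕ} (ha : a < n) (hb : b < n) (h : b < a) :
    Fin.cycleRange ⟨a, ha⟩ ⟨b, hb⟩ = ⟨b + 1, by omega⟩ :=
  Fin.ext (Fin.coe_cycleRange_of_lt h)

lemma Fin.cycleRange_mk_of_gt {n a b : ℕ} (ha : a < n) (hb : b < n) (h : a < b) :
    Fin.cycleRange ⟨a, ha⟩ ⟨b, hb⟩ = ⟨b, hb⟩ :=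
  Fin.cycleRange_of_gt h

section Peaks

variable {n j j' : ℕ} {τ τ' : Perm (Fin n)}

lemma add_two_lt_of_mem_peakSet (h : j ∈ peakSet n τ) : j + 2 < n :=
  (mem_filter.mp h).2.1

lemma mem_peakSet_iff (hj : j + 2 < n) :
    j ∈ peakSet n τ ↔
      τ ⟨j, by omega⟩ < τ ⟨j + 1, by omega⟩ ∧ τ ⟨j + 2, hj⟩ < τ ⟨j + 1, by omega⟩ := by
  simp [peakSet, hj, show j < n - 2 by omega]

lemma mem_peakSet_iff_of_apply_eq (hj : j + 2 < n) (hj' : j' + 2 < n)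
    (h : ∀ k (hk : k < 3), τ ⟨j + k, by omega⟩ = τ' ⟨j' + k, by omega⟩) :
    j ∈ peakSet n τ ↔ j' ∈ peakSet n τ' := by
  have h0 : τ ⟨j, _⟩ = τ' ⟨j', _⟩ := h 0 (by omega)
  rw [mem_peakSet_iff hj, mem_peakSet_iff hj', h0, h 1 (by omega), h 2 (by omega)]

lemma mem_peakSet_iff_of_apply_eq_rev (hj : j + 2 < n) (hj' : j' + 2 < n)
    (h : ∀ k (hk : k < 3), τ ⟨j + k, by omega⟩ = τ' ⟨j' + (2 - k), by omega⟩) :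
    j ∈ peakSet n τ ↔ j' ∈ peakSet n τ' := by
  have h0 : τ ⟨j, _⟩ = τ' ⟨j' + 2, _⟩ := h 0 (by omega)
  have h2 : τ ⟨j + 2, _⟩ = τ' ⟨j', _⟩ := h 2 (by omega)
  rw [mem_peakSet_iff hj, mem_peakSet_iff hj', h0, h 1 (by omega), h2, and_comm]

lemma sum_peakSet_eq_sum_range {M : Type*} [NonAssocSemiring M] (f : ℕ → M) :
    ∑ j ∈ peakSet n τ, f j = ∑ j ∈ range (n - 2), f j * (if j ∈ peakSet n τ then 1 else 0) := by
  simp only [mul_boole]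
  rw [← sum_filter, filter_mem_eq_inter,
    inter_eq_right.mpr fun j hj => mem_range.mpr (by have := add_two_lt_of_mem_peakSet hj; omega)]

lemma mem_peakSet_mul_revPerm :
    j ∈ peakSet n (τ * Fin.revPerm) ↔ j + 2 < n ∧ n - 3 - j ∈ peakSet n τ := by
  by_cases hj : j + 2 < n
  · have key := mem_peakSet_iff_of_apply_eq_rev (τ := τ * Fin.revPerm) (τ' := τ) hj
      (show n - 3 - j + 2 < n by omega) fun k hk => by
        simp only [Perm.mul_apply, Fin.revPerm_apply]
        congr 1
        ext
        simp only [Fin.val_rev]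
        omega
    exact ⟨fun h => ⟨hj, key.mp h⟩, fun h => key.mpr h.2⟩
  · exact iff_of_false (fun h => hj (add_two_lt_of_mem_peakSet h)) fun h => hj h.1

lemma sum_peakSet_mul_revPerm {M : Type*} [AddCommMonoid M] (f : ℕ → M) :
    ∑ j ∈ peakSet n (τ * Fin.revPerm), f j = ∑ j ∈ peakSet n τ, f (n - 3 - j) := by
  refine sum_nbij' (fun j => n - 3 - j) (fun j => n - 3 - j) ?_ ?_ ?_ ?_ ?_
  · exact fun j hj => (mem_peakSet_mul_revPerm.mp hj).2
  · intro j hj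
    have := add_two_lt_of_mem_peakSet hj
    exact mem_peakSet_mul_revPerm.mpr ⟨by omega, by rwa [Nat.sub_sub_self (by omega)]⟩
  · intro j hj
    have := add_two_lt_of_mem_peakSet hj
    omega
  · intro j hj
    have := add_two_lt_of_mem_peakSet hj
    omega
  · intro j hj
    have := add_two_lt_of_mem_peakSet hj
    simp only [Nat.sub_sub_self (show j ≤ n - 3 by omega)]

lemma gpk_eq_sum_bernsteinPolynomial (q : ℝ) (τ : Perm (Fin n)) :
    gpk n q τ = ∑ j ∈ peakSet n τ, (bernsteinPolynomial ℝ (n - 3) j).eval q := by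
  simp [gpk, bernsteinPolynomial]

lemma gpk_eq_sum_range (q : ℝ) (τ : Perm (Fin n)) :
    gpk n q τ = ∑ j ∈ range (n - 2),
      (bernsteinPolynomial ℝ (n - 3) j).eval q * (if j ∈ peakSet n τ then 1 else 0) := by
  rw [gpk_eq_sum_bernsteinPolynomial, sum_peakSet_eq_sum_range]

lemma gpk_mul_revPerm (q : ℝ) (τ : Perm (Fin n)) :
    gpk n q (τ * Fin.revPerm) = gpk n (1 - q) τ := by
  rw [gpk_eq_sum_bernsteinPolynomial, gpk_eq_sum_bernsteinPolynomial, sum_peakSet_mul_revPerm]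
  refine sum_congr rfl fun j hj => ?_
  have := add_two_lt_of_mem_peakSet hj
  rw [bernsteinPolynomial_eval_one_sub (by omega)]

end Peaks

section TopToRandom

variable {n j : ℕ} {σ : Perm (Fin n)} {i : Fin n}

lemma mem_peakSet_mul_cycleRange_of_val_lt (hi : i.val < j) :
    j ∈ peakSet n (σ * Fin.cycleRange i) ↔ j ∈ peakSet n σ := by
  by_cases hj : j + 2 < n
  · refine mem_peakSet_iff_of_apply_eq hj hj fun k hk => ?_
    rw [Perm.mul_apply, Fin.cycleRange_of_gt (show i.val < j + k by omega)]
  · exact iff_of_false (fun h => hj (add_two_lt_of_mem_peakSet h))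
      fun h => hj (add_two_lt_of_mem_peakSet h)

lemma mem_peakSet_mul_cycleRange_of_lt_val (hi : j + 2 < i.val) :
    j ∈ peakSet n (σ * Fin.cycleRange i) ↔ j + 1 ∈ peakSet n σ := by
  refine mem_peakSet_iff_of_apply_eq (by omega) (by omega) fun k hk => ?_
  rw [Perm.mul_apply]
  congr 1
  ext
  rw [Fin.coe_cycleRange_of_lt (show j + k < i.val by omega)]
  dsimp only
  omega

lemma sum_ite_mem_peakSet_mul_cycleRange_three (σ : Perm (Fin n)) (hj : j + 2 < n) :
    (if j ∈ peakSet n (σ * Fin.cycleRange ⟨j, by omega⟩) then (1 : ℝ) else 0) +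
      (if j ∈ peakSet n (σ * Fin.cycleRange ⟨j + 1, by omega⟩) then 1 else 0) +
      (if j ∈ peakSet n (σ * Fin.cycleRange ⟨j + 2, hj⟩) then 1 else 0) = 1 := by
  have : NeZero n := ⟨by omega⟩
  simp only [mem_peakSet_iff hj, Perm.mul_apply, Fin.cycleRange_self]
  simp (disch := omega) only [Fin.cycleRange_mk_of_gt, Fin.cycleRange_mk_of_lt]
  refine ite_max_three_eq_one ?_ ?_ ?_ <;> exact σ.injective.ne (by simp [Fin.ext_iff])

lemma sum_ite_mem_peakSet_mul_cycleRange (σ : Perm (Fin n)) (hj : j + 2 < n) :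
    ∑ i : Fin n, (if j ∈ peakSet n (σ * Fin.cycleRange i) then (1 : ℝ) else 0) =
      j * (if j ∈ peakSet n σ then 1 else 0) +
        (n - 3 - j : ℕ) * (if j + 1 ∈ peakSet n σ then 1 else 0) + 1 := by
  obtain ⟨r, rfl⟩ : ∃ r, n = j + 3 + r := ⟨n - 3 - j, by omega⟩
  rw [sum_fin_eq_sum_range, sum_range_add, sum_range_succ, sum_range_succ, sum_range_succ,
    dif_pos (by omega), dif_pos (by omega), dif_pos hj, show j + 3 + r - 3 - j = r by omega]
  have below : ∀ x ∈ range j, (if h : x < j + 3 + r then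
      (if j ∈ peakSet _ (σ * Fin.cycleRange ⟨x, h⟩) then (1 : ℝ) else 0) else 0) =
      if j ∈ peakSet _ σ then 1 else 0 := fun x hx => by
    rw [mem_range] at hx
    rw [dif_pos (by omega)]
    exact if_congr (mem_peakSet_mul_cycleRange_of_val_lt hx) rfl rfl
  have above : ∀ x ∈ range r, (if h : j + 3 + x < j + 3 + r then
      (if j ∈ peakSet _ (σ * Fin.cycleRange ⟨j + 3 + x, h⟩) then (1 : ℝ) else 0) else 0) =
      if j + 1 ∈ peakSet _ σ then 1 else 0 := fun x hx => by
    rw [mem_range] at hx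
    rw [dif_pos (by omega)]
    exact if_congr (mem_peakSet_mul_cycleRange_of_lt_val (by dsimp only; omega)) rfl rfl
  rw [sum_congr rfl below, sum_congr rfl above]
  simp only [sum_const, card_range, nsmul_eq_mul]
  linear_combination sum_ite_mem_peakSet_mul_cycleRange_three σ hj

lemma mul_sum_gpk_mul_cycleRange (hn : 3 ≤ n) (q : ℝ) (σ : Perm (Fin n)) :
    q * ∑ i : Fin n, gpk n q (σ * Fin.cycleRange i) =
      q + ∑ j ∈ peakSet n σ, j * (bernsteinPolynomial ℝ (n - 3) j).eval q := by
  simp only [gpk_eq_sum_range]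
  rw [sum_comm, sum_peakSet_eq_sum_range]
  obtain ⟨N, rfl⟩ : ∃ N, n = N + 3 := ⟨n - 3, by omega⟩
  set b := fun j => (bernsteinPolynomial ℝ N j).eval q
  set p := fun j => if j ∈ peakSet (N + 3) σ then (1 : ℝ) else 0
  have count : ∀ j ∈ range (N + 1), ∑ i : Fin (N + 3),
      b j * (if j ∈ peakSet (N + 3) (σ * Fin.cycleRange i) then 1 else 0) =
      b j * (j * p j + (N - j : ℕ) * p (j + 1) + 1) := fun j hj => by
    rw [← mul_sum, sum_ite_mem_peakSet_mul_cycleRange σ (by simp at hj; omega),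
      Nat.add_sub_cancel]
  simp only [show N + 3 - 2 = N + 1 by omega, Nat.add_sub_cancel]
  rw [sum_congr rfl count]
  have split : ∑ j ∈ range (N + 1), b j * (j * p j + (N - j : ℕ) * p (j + 1) + 1) =
      ∑ j ∈ range (N + 1), j * b j * p j + ∑ j ∈ range (N + 1), (N - j : ℕ) * b j * p (j + 1) +
        ∑ j ∈ range (N + 1), b j := by
    rw [← sum_add_distrib, ← sum_add_distrib]
    exact sum_congr rfl fun _ _ => by ring
  rw [split]
  linear_combination sum_mul_sub_mul_bernsteinPolynomial_eval N q p +
    q * sum_bernsteinPolynomial_eval N q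

end TopToRandom

lemma one_sub_mul_sum_gpk_mul_botCycle {n : ℕ} (hn : 3 ≤ n) (q : ℝ) (σ : Perm (Fin n)) :
    (1 - q) * ∑ i : Fin n, gpk n q (σ * botCycle n i) =
      (1 - q) +
        ∑ j ∈ peakSet n σ, ((n : ℝ) - 3 - j) * (bernsteinPolynomial ℝ (n - 3) j).eval q := by
  have reflect : ∑ i : Fin n, gpk n q (σ * botCycle n i) =
      ∑ i : Fin n, gpk n (1 - q) (σ * Fin.revPerm * Fin.cycleRange i) := by
    refine Fintype.sum_equiv Fin.revPerm _ _ fun i => ?_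
    rw [botCycle, ← mul_assoc, ← mul_assoc, gpk_mul_revPerm, Fin.revPerm_apply]
  rw [reflect, mul_sum_gpk_mul_cycleRange hn, sum_peakSet_mul_revPerm]
  congr 1
  refine sum_congr rfl fun j hj => ?_
  have := add_two_lt_of_mem_peakSet hj
  rw [bernsteinPolynomial_eval_one_sub (by omega), Nat.sub_sub_self (by omega),
    Nat.cast_sub (by omega), Nat.cast_sub hn, Nat.cast_ofNat]

lemma sum_card_fiber_mul {ι α : Type*} [Fintype ι] [Fintype α] [DecidableEq α] (h : ι → α)
    (f : α → ℝ) : ∑ a, (#{i | a = h i} : ℝ) * f a = ∑ i, f (h i) := by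
  simp only [card_eq_sum_ones, Nat.cast_sum, sum_filter, sum_mul]
  rw [sum_comm]
  simp

lemma sum_Pq_mul {n : ℕ} (q : ℝ) (σ : Perm (Fin n)) (f : Perm (Fin n) → ℝ) :
    ∑ τ, Pq n q σ τ * f τ = q / n * ∑ i, f (σ * Fin.cycleRange i) +
      (1 - q) / n * ∑ i, f (σ * botCycle n i) := by
  simp only [Pq, add_mul, sum_add_distrib, mul_assoc, ← mul_sum, sum_card_fiber_mul]

theorem stmt14_general (n : ℕ) (hn : 3 ≤ n) (q : ℝ)
    (σ : Equiv.Perm (Fin n)) :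
    ∑ τ : Equiv.Perm (Fin n), Pq n q σ τ * (gpk n q τ - 1 / 3) =
      (((n : ℝ) - 3) / n) * (gpk n q σ - 1 / 3) := by
  have top := mul_sum_gpk_mul_cycleRange hn q σ
  have bottom := one_sub_mul_sum_gpk_mul_botCycle hn q σ
  have weights : ∑ j ∈ peakSet n σ, j * (bernsteinPolynomial ℝ (n - 3) j).eval q +
      ∑ j ∈ peakSet n σ, ((n : ℝ) - 3 - j) * (bernsteinPolynomial ℝ (n - 3) j).eval q =
      (n - 3) * gpk n q σ := by
    rw [gpk_eq_sum_bernsteinPolynomial, ← sum_add_distrib, mul_sum]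
    exact sum_congr rfl fun _ _ => by ring
  have hn0 : (n : ℝ) ≠ 0 := Nat.cast_ne_zero.mpr (by omega)
  rw [sum_Pq_mul, sum_sub_distrib, sum_sub_distrib, sum_const, card_univ, Fintype.card_fin]
  field_simp
  linear_combination 3 * (top + bottom + weights)

/-- `σ ↦ g(σ) - 1/3` is a right eigenfunction of the top-or-bottom-to-random
transition matrix with eigenvalue `(n-3)/n`. -/
theorem stmt14 (n : ℕ) (hn : 3 ≤ n) (q : ℝ) (hq : q ∈ Set.Icc (0 : ℝ) 1)
    (σ : Equiv.Perm (Fin n)) :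
    ∑ τ : Equiv.Perm (Fin n), Pq n q σ τ * (gpk n q τ - 1 / 3) =
      (((n : ℝ) - 3) / n) * (gpk n q σ - 1 / 3) :=
  stmt14_general n hn q σ
end

section
/- Let n ≥ 2 and a ≥ 1 be integers and let P_a be the a-handed riffle shuffle transition matrix on S_n. Then for every integer t ≥ 0, the entry of the vector P_a^t · pk at the identity permutation equals (1 − a^{−2t})·(n−2)/3, where pk : S_n → ℚ is the number-of-peaks function. (In words: if a deck of n distinct cards starts in ascending order, then after t iterations of the a-handed shuffle the expected number of peaks is (1 − a^{−2t})(n−2)/3.) -/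
open Finset

/-!
By the Bayer–Diaconis formula, `Pa n a σ τ` is the probability that the stable sort of a uniform
random word `w : Fin n → Fin a` is `τ⁻¹ * σ`, since a stars-and-bars shift identifies the words
sorted by `ρ` with the strictly increasing maps `Fin n → Fin (n + a - 1 - des ρ)`. Radix sort merges
an `a`-word and a `b`-word into an `ab`-word, so `Pa a * Pa b = Pa (a * b)` and
`Pa a ^ t = Pa (a ^ t)`. From the identity, a `c`-shuffle yields `(sort w)⁻¹`, which has a peak at
`i` iff `w i ≤ w (i + 1) > w (i + 2)`; `(c³ - c) / 3` of the `c³` triples do this, and summing over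
the `n - 2` positions gives `(1 - c⁻²) (n - 2) / 3`.
-/

lemma Fin.strictMono_iff_lt_add_one_s16 {n : ℕ} {γ : Type*} [Preorder γ] {f : Fin n → γ} :
    StrictMono f ↔ ∀ i (hi : i + 1 < n), f ⟨i, by omega⟩ < f ⟨i + 1, hi⟩ := by
  rcases n with _ | n
  · simp [Subsingleton.strictMono]
  · rw [Fin.strictMono_iff_lt_succ]
    exact ⟨fun h i hi => h ⟨i, by omega⟩, fun h i => h i i.succ.isLt⟩

lemma StrictMono.val_add_sub_le {N m : ℕ} {h : Fin N → Fin m} (hh : StrictMono h) {i j : Fin N}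
    (hij : i ≤ j) : (h i : ℕ) + (j - i) ≤ h j := by
  have := card_le_card_of_injOn h (s := Icc i j) (t := Icc (h i) (h j))
    (fun k hk => by
      rw [coe_Icc, Set.mem_Icc] at hk
      exact mem_Icc.2 ⟨hh.monotone hk.1, hh.monotone hk.2⟩) hh.injective.injOn
  simp only [Fin.card_Icc] at this
  have := hh.monotone hij
  rw [Fin.le_def] at this hij
  omega

lemma StrictMono.val_le_val_apply {N m : ℕ} {h : Fin N → Fin m} (hh : StrictMono h) (i : Fin N) :
    (i : ℕ) ≤ h i := by
  have := hh.val_add_sub_le (i := ⟨0, i.pos⟩) (j := i) (Fin.le_def.2 (Nat.zero_le _))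
  simp only at this
  omega

lemma StrictMono.val_apply_add_lt {N m : ℕ} {h : Fin N → Fin m} (hh : StrictMono h) (i : Fin N) :
    (h i : ℕ) + (N - 1 - i) < m := by
  have hi := i.isLt
  have := hh.val_add_sub_le (i := i) (j := ⟨N - 1, by omega⟩) (Fin.le_def.2 (by simp only; omega))
  have := (h ⟨N - 1, by omega⟩).isLt
  simp only at *
  omega

namespace Tuple

variable {n : ℕ} {α β : Type*} [LinearOrder α] [LinearOrder β]

lemma graphEquiv₁_lt_graphEquiv₁_iff (w : Fin n → α) (p q : Fin n) :
    graphEquiv₁ w p < graphEquiv₁ w q ↔ toLex (w p, p) < toLex (w q, q) := Iff.rfl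

lemma toLex_lt_toLex_sort (w : Fin n → α) {i j : Fin n} (hij : i < j) :
    toLex (w (sort w i), sort w i) < toLex (w (sort w j), sort w j) :=
  eq_sort_iff'.mp rfl hij

lemma sort_inv_lt_sort_inv_iff (w : Fin n → α) (p q : Fin n) :
    (sort w)⁻¹ p < (sort w)⁻¹ q ↔ toLex (w p, p) < toLex (w q, q) := by
  rw [← (eq_sort_iff'.mp (rfl : sort w = sort w)).lt_iff_lt]
  simp [graphEquiv₁_lt_graphEquiv₁_iff]

lemma sort_eq_iff_lex_lt_succ (w : Fin n → α) (ρ : Equiv.Perm (Fin n)) :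
    sort w = ρ ↔ ∀ i (hi : i + 1 < n),
      toLex (w (ρ ⟨i, by omega⟩), ρ ⟨i, by omega⟩) < toLex (w (ρ ⟨i + 1, hi⟩), ρ ⟨i + 1, hi⟩) := by
  rw [eq_comm, eq_sort_iff', Fin.strictMono_iff_lt_add_one_s16]
  rfl

lemma sort_comp_strictMono {e : α → β} (he : StrictMono e) (w : Fin n → α) :
    sort (e ∘ w) = sort w := by
  refine (eq_sort_iff'.mpr fun i j hij => ?_).symm
  have := toLex_lt_toLex_sort w hij
  simp only [Equiv.trans_apply, graphEquiv₁_lt_graphEquiv₁_iff, Prod.Lex.toLex_lt_toLex,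
    Function.comp_apply, he.lt_iff_lt, he.injective.eq_iff] at this ⊢
  exact this

lemma sort_eq_one_of_subsingleton [Subsingleton α] (w : Fin n → α) : sort w = 1 :=
  sort_eq_refl_iff_monotone.mpr fun _ _ _ => (Subsingleton.elim _ _).le

/-- Radix sort: stably sorting by `v` and then by `u` (read in `v`-sorted order) is the stable
sort by the pair. -/
theorem sort_toLex (u : Fin n → α) (v : Fin n → β) :
    sort (fun j => toLex (u ((sort v)⁻¹ j), v j)) = sort v * sort u := by
  refine (eq_sort_iff'.mpr fun i j hij => ?_).symm
  have hu := toLex_lt_toLex_sort u hij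
  simp only [Equiv.trans_apply, graphEquiv₁_lt_graphEquiv₁_iff, Prod.Lex.toLex_lt_toLex,
    Equiv.Perm.mul_apply, Equiv.Perm.coe_inv, Equiv.symm_apply_apply] at hu ⊢
  rcases hu with hu | ⟨hu, hlt⟩
  · exact Or.inl (Or.inl hu)
  · have hv := toLex_lt_toLex_sort v hlt
    simp only [Prod.Lex.toLex_lt_toLex] at hv
    rcases hv with hv | ⟨hv, hlt'⟩
    · exact Or.inl (Or.inr ⟨hu, hv⟩)
    · exact Or.inr ⟨Prod.ext hu hv, hlt'⟩

end Tuple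

lemma Fintype.card_subtype_comp_embedding {κ ι α : Type*} [Fintype κ] [Fintype ι] [Fintype α]
    [DecidableEq κ] [DecidableEq ι] (e : κ ↪ ι) (P : (κ → α) → Prop) [DecidablePred P] :
    Fintype.card {w : ι → α // P (w ∘ e)} =
      Fintype.card {g : κ → α // P g} * Fintype.card α ^ (Fintype.card ι - Fintype.card κ) := by
  classical
  let restrict : (ι → α) ≃ (κ → α) × ({i // i ∉ Set.range e} → α) :=
    (Equiv.piEquivPiSubtypeProd (· ∈ Set.range e) _).trans
      ((Equiv.arrowCongr (Equiv.ofInjective e e.injective).symm (Equiv.refl α)).prodCongr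
        (Equiv.refl _))
  rw [Fintype.card_congr
      (restrict.subtypeEquiv (p := fun w => P (w ∘ e)) (q := fun x => P x.1) fun _ => Iff.rfl),
    Fintype.card_congr Equiv.prodSubtypeFstEquivSubtypeProd, Fintype.card_prod, Fintype.card_fun,
    Fintype.card_subtype_compl, Set.card_range_of_injective e.injective]

section Descents

variable {n : ℕ} (ρ : Equiv.Perm (Fin n))

lemma mem_desSet {i : ℕ} :
    i ∈ desSet n ρ ↔ ∃ h : i + 1 < n, ρ ⟨i + 1, h⟩ < ρ ⟨i, by omega⟩ := by
  simp only [desSet, Finset.mem_filter, Finset.mem_range, and_iff_right_iff_imp]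
  rintro ⟨h, -⟩
  omega

def desBelow (i : ℕ) : ℕ := #{j ∈ desSet n ρ | j < i}

lemma desBelow_le_self (i : ℕ) : desBelow ρ i ≤ i :=
  (card_le_card fun _ hj => mem_range.2 (mem_filter.1 hj).2).trans_eq (card_range i)

lemma desBelow_le_des (i : ℕ) : desBelow ρ i ≤ des n ρ :=
  card_le_card (filter_subset _ _)

lemma des_le_desBelow_add (i : ℕ) : des n ρ ≤ desBelow ρ i + (n - 1 - i) := by
  have hrest : #{j ∈ desSet n ρ | ¬ j < i} ≤ n - 1 - i := by
    refine (card_le_card fun j hj => ?_).trans_eq (Nat.card_Ico i (n - 1))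
    simp only [desSet, mem_filter, mem_range, not_lt] at hj
    exact mem_Ico.2 ⟨hj.2, hj.1.1⟩
  have := card_filter_add_card_filter_not (s := desSet n ρ) (p := (· < i))
  rw [des, desBelow]
  omega

lemma desBelow_succ (i : ℕ) :
    desBelow ρ (i + 1) = desBelow ρ i + if i ∈ desSet n ρ then 1 else 0 := by
  simp only [desBelow, Nat.lt_succ_iff_lt_or_eq, filter_or, filter_eq']
  split_ifs <;> simp

end Descents

lemma Tuple.sort_eq_iff_le_succ {n : ℕ} {α : Type*} [LinearOrder α] (w : Fin n → α)
    (ρ : Equiv.Perm (Fin n)) :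
    Tuple.sort w = ρ ↔ ∀ i (hi : i + 1 < n), w (ρ ⟨i, by omega⟩) ≤ w (ρ ⟨i + 1, hi⟩) ∧
      (i ∈ desSet n ρ → w (ρ ⟨i, by omega⟩) < w (ρ ⟨i + 1, hi⟩)) := by
  rw [Tuple.sort_eq_iff_lex_lt_succ]
  refine forall_congr' fun i => forall_congr' fun hi => ?_
  have hne : ρ ⟨i, by omega⟩ ≠ ρ ⟨i + 1, hi⟩ := by simp [Fin.ext_iff]
  rw [Prod.Lex.toLex_lt_toLex, mem_desSet, exists_prop_of_true hi]
  constructor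
  · rintro (h | ⟨h, h'⟩)
    · exact ⟨h.le, fun _ => h⟩
    · exact ⟨h.le, fun h'' => absurd h' h''.not_gt⟩
  · rintro ⟨h, h'⟩
    rcases h.lt_or_eq with h | h
    · exact Or.inl h
    · exact Or.inr ⟨h, (lt_or_gt_of_ne hne).resolve_right fun h'' => (h' h'').ne h⟩

section SortFiber

variable {n c : ℕ} (ρ : Equiv.Perm (Fin n))

/-- `sort w = ρ` says that `w ∘ ρ` is weakly increasing and strictly increasing at the descents of
`ρ`; adding `i - desBelow ρ i` at position `i` turns exactly these into strictly increasing maps. -/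
lemma sort_eq_iff_strictMono_add (w : Fin n → Fin c) :
    Tuple.sort w = ρ ↔ StrictMono fun i : Fin n => (w (ρ i) : ℕ) + (i - desBelow ρ i) := by
  rw [Tuple.sort_eq_iff_le_succ, Fin.strictMono_iff_lt_add_one_s16]
  refine forall_congr' fun i => forall_congr' fun hi => ?_
  have := desBelow_le_self ρ i
  simp only [Fin.lt_def, Fin.le_def, desBelow_succ]
  split_ifs with hd
  · exact ⟨fun h => by have := h.2 hd; omega, fun h => ⟨by omega, fun _ => by omega⟩⟩
  · exact ⟨fun h => by omega, fun h => ⟨by omega, (absurd · hd)⟩⟩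

def sortFiberEquiv :
    {w : Fin n → Fin c // Tuple.sort w = ρ} ≃
      {h : Fin n → Fin (n + c - 1 - des n ρ) // StrictMono h} where
  toFun w := ⟨fun i => ⟨w.1 (ρ i) + (i - desBelow ρ i), by
      have := (w.1 (ρ i)).isLt
      have := desBelow_le_self ρ i
      have := des_le_desBelow_add ρ i
      omega⟩, (sort_eq_iff_strictMono_add ρ w.1).1 w.2⟩
  invFun h := ⟨fun p => ⟨h.1 (ρ⁻¹ p) - (ρ⁻¹ p - desBelow ρ (ρ⁻¹ p)), by
      have := h.2.val_apply_add_lt (ρ⁻¹ p)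
      have := h.2.val_le_val_apply (ρ⁻¹ p)
      have := desBelow_le_des ρ (ρ⁻¹ p)
      omega⟩, by
    refine (sort_eq_iff_strictMono_add ρ _).2 fun i j hij => ?_
    have hlt : (h.1 i : ℕ) < h.1 j := h.2 hij
    have := h.2.val_le_val_apply i
    have := h.2.val_le_val_apply j
    simp only [Equiv.Perm.coe_inv, Equiv.symm_apply_apply]
    omega⟩
  left_inv w := by
    ext p
    simp
  right_inv h := by
    ext i
    have := h.2.val_le_val_apply i
    simp only [Equiv.Perm.coe_inv, Equiv.symm_apply_apply]
    omega

end SortFiber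

lemma card_strictMono_fin (N m : ℕ) :
    Fintype.card {h : Fin N → Fin m // StrictMono h} = m.choose N := by
  let e : {h : Fin N → Fin m // StrictMono h} ≃ (Fin N ↪o Fin m) :=
    { toFun h := OrderEmbedding.ofStrictMono h.1 h.2
      invFun f := ⟨f, f.strictMono⟩ }
  rw [← Nat.card_eq_fintype_card, Nat.card_congr (e.trans Set.powersetCard.ofFinEmbEquiv),
    Set.powersetCard.card, Nat.card_eq_fintype_card, Fintype.card_fin]

def sortFiberCard (n c : ℕ) (ρ : Equiv.Perm (Fin n)) : ℕ :=
  Fintype.card {w : Fin n → Fin c // Tuple.sort w = ρ}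

lemma sortFiberCard_eq_choose {n c : ℕ} (ρ : Equiv.Perm (Fin n)) :
    sortFiberCard n c ρ = (n + c - 1 - des n ρ).choose n := by
  rw [sortFiberCard, Fintype.card_congr (sortFiberEquiv ρ), card_strictMono_fin]

lemma Pa_apply (n a : ℕ) (σ τ : Equiv.Perm (Fin n)) :
    Pa n a σ τ = sortFiberCard n a (τ⁻¹ * σ) / (a : ℚ) ^ n := by
  rw [Pa, sortFiberCard_eq_choose]

lemma sum_sortFiberCard_smul {n c : ℕ} {M : Type*} [AddCommMonoid M] (g : Equiv.Perm (Fin n) → M) :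
    ∑ ρ, sortFiberCard n c ρ • g ρ = ∑ w : Fin n → Fin c, g (Tuple.sort w) := by
  rw [← sum_fiberwise univ Tuple.sort]
  refine sum_congr rfl fun ρ _ => ?_
  rw [sortFiberCard, Fintype.card_subtype, ← sum_const]
  exact sum_congr rfl fun w hw => by rw [(mem_filter.1 hw).2]

lemma Pa_mulVec_apply_one (n c : ℕ) (f : Equiv.Perm (Fin n) → ℚ) :
    (Pa n c).mulVec f 1 = (∑ w : Fin n → Fin c, f (Tuple.sort w)⁻¹) / (c : ℚ) ^ n := by
  simp only [Matrix.mulVec, dotProduct, Pa_apply, mul_one, div_mul_eq_mul_div, ← sum_div]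
  rw [← Equiv.sum_comp (Equiv.inv _), ← sum_sortFiberCard_smul fun ρ => f ρ⁻¹]
  simp [nsmul_eq_mul]

lemma sortFiberCard_one {n : ℕ} (ρ : Equiv.Perm (Fin n)) :
    sortFiberCard n 1 ρ = if ρ = 1 then 1 else 0 := by
  by_cases h : ρ = 1 <;> simp [sortFiberCard, Tuple.sort_eq_one_of_subsingleton, h, eq_comm]

lemma Pa_one (n : ℕ) : Pa n 1 = 1 := by
  ext σ τ
  simp [Pa_apply, sortFiberCard_one, Matrix.one_apply, inv_mul_eq_one, eq_comm]

section Composition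

variable {n : ℕ}

lemma strictMono_finProdFinEquiv_ofLex {a b : ℕ} :
    StrictMono fun x : Fin a ×ₗ Fin b => finProdFinEquiv (ofLex x) := by
  intro x y hxy
  rcases Prod.Lex.lt_iff.1 hxy with h | ⟨h, h'⟩
  · simp only [Fin.lt_def, finProdFinEquiv_apply_val]
    have := (ofLex x).2.isLt
    have : (b : ℕ) * ((ofLex x).1 + 1) ≤ b * (ofLex y).1 := Nat.mul_le_mul_left _ h
    linarith
  · simp only [Fin.lt_def, finProdFinEquiv_apply_val, h]
    omega

def mergeWordsEquiv (n a b : ℕ) : (Fin n → Fin a) × (Fin n → Fin b) ≃ (Fin n → Fin (a * b)) where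
  toFun p j := finProdFinEquiv (p.1 ((Tuple.sort p.2)⁻¹ j), p.2 j)
  invFun w :=
    (fun i => (finProdFinEquiv.symm (w (Tuple.sort (fun j => (finProdFinEquiv.symm (w j)).2) i))).1,
      fun j => (finProdFinEquiv.symm (w j)).2)
  left_inv p := by simp
  right_inv w := by ext j; simp [Nat.mod_add_div]

lemma sort_mergeWordsEquiv {a b : ℕ} (u : Fin n → Fin a) (v : Fin n → Fin b) :
    Tuple.sort (mergeWordsEquiv n a b (u, v)) = Tuple.sort v * Tuple.sort u := by
  rw [← Tuple.sort_toLex u v, ← Tuple.sort_comp_strictMono strictMono_finProdFinEquiv_ofLex]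
  rfl

lemma sum_sortFiberCard_mul (a b : ℕ) (μ : Equiv.Perm (Fin n)) :
    ∑ π, sortFiberCard n a (π⁻¹ * μ) * sortFiberCard n b π = sortFiberCard n (a * b) μ := by
  let splitBySort :
      {p : (Fin n → Fin a) × (Fin n → Fin b) // Tuple.sort p.2 * Tuple.sort p.1 = μ} ≃
        Σ π : Equiv.Perm (Fin n),
          {u : Fin n → Fin a // Tuple.sort u = π⁻¹ * μ} × {v : Fin n → Fin b // Tuple.sort v = π} :=
    { toFun p := ⟨Tuple.sort p.1.2, ⟨p.1.1, eq_inv_mul_iff_mul_eq.2 p.2⟩, ⟨p.1.2, rfl⟩⟩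
      invFun x := ⟨(x.2.1.1, x.2.2.1), by rw [x.2.1.2, x.2.2.2, mul_inv_cancel_left]⟩
      left_inv _ := rfl
      right_inv := by
        rintro ⟨π, ⟨u, hu⟩, ⟨v, rfl⟩⟩
        rfl }
  calc ∑ π, sortFiberCard n a (π⁻¹ * μ) * sortFiberCard n b π
      = Fintype.card {p : (Fin n → Fin a) × (Fin n → Fin b) //
          Tuple.sort p.2 * Tuple.sort p.1 = μ} := by
        simp [Fintype.card_congr splitBySort, Fintype.card_sigma, sortFiberCard]
    _ = sortFiberCard n (a * b) μ :=
        Fintype.card_congr ((mergeWordsEquiv n a b).subtypeEquiv fun p => by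
          rw [← sort_mergeWordsEquiv])

end Composition

lemma Pa_mul (n a b : ℕ) : Pa n a * Pa n b = Pa n (a * b) := by
  ext σ τ
  rw [Matrix.mul_apply, ← Equiv.sum_comp (Equiv.mulLeft τ)]
  simp only [Pa_apply, Equiv.coe_mulLeft, mul_inv_rev, mul_assoc, inv_mul_cancel_left,
    div_mul_div_comm, ← Finset.sum_div]
  rw [Nat.cast_mul, mul_pow, ← sum_sortFiberCard_mul, Nat.cast_sum]
  simp only [Nat.cast_mul]

lemma Pa_pow (n a t : ℕ) : Pa n a ^ t = Pa n (a ^ t) := by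
  induction t with
  | zero => rw [pow_zero, pow_zero, Pa_one]
  | succ t ih => rw [pow_succ, ih, Pa_mul, ← pow_succ]

def peakPatternCount (c : ℕ) : ℕ := Fintype.card {g : Fin 3 → Fin c // g 0 ≤ g 1 ∧ g 2 < g 1}

lemma peakPatternCount_eq_sum (c : ℕ) : peakPatternCount c = ∑ y : Fin c, ((y : ℕ) + 1) * y := by
  let triple : (Fin 3 → Fin c) ≃ Fin c × Fin c × Fin c :=
    (Fin.consEquiv fun _ => Fin c).symm.trans ((Equiv.refl _).prodCongr (finTwoArrowEquiv _))
  rw [peakPatternCount, Fintype.card_congr (triple.subtypeEquiv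
      (p := fun g => g 0 ≤ g 1 ∧ g 2 < g 1) (q := fun t => t.1 ≤ t.2.1 ∧ t.2.2 < t.2.1)
      fun _ => Iff.rfl), Fintype.card_subtype, card_filter]
  simp only [Fintype.sum_prod_type]
  rw [Finset.sum_comm]
  refine sum_congr rfl fun y _ => ?_
  convert_to (∑ x : Fin c, ∑ z : Fin c, if x ≤ y ∧ z < y then 1 else 0) = _
  simp [ite_and, ← Finset.sum_filter, filter_ge_eq_Iic, filter_gt_eq_Iio]

lemma sum_range_succ_mul_self (c : ℕ) : 3 * ∑ y ∈ range c, (y + 1) * y + c = c ^ 3 := by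
  induction c with
  | zero => rfl
  | succ c ih => rw [sum_range_succ]; nlinarith

lemma three_mul_peakPatternCount_add_self (c : ℕ) : 3 * peakPatternCount c + c = c ^ 3 := by
  rw [peakPatternCount_eq_sum, Fin.sum_univ_eq_sum_range (fun y => (y + 1) * y),
    sum_range_succ_mul_self]

section Peaks

variable {n : ℕ}

lemma mem_peakSet_sort_inv_iff {α : Type*} [LinearOrder α] (w : Fin n → α) (i : ℕ) :
    i ∈ peakSet n (Tuple.sort w)⁻¹ ↔ ∃ h : i + 2 < n,
      w ⟨i, by omega⟩ ≤ w ⟨i + 1, by omega⟩ ∧ w ⟨i + 2, h⟩ < w ⟨i + 1, by omega⟩ := by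
  simp only [peakSet, mem_filter, mem_range, Tuple.sort_inv_lt_sort_inv_iff,
    Prod.Lex.toLex_lt_toLex, Fin.mk_lt_mk]
  constructor
  · rintro ⟨-, h, h1, h2⟩
    exact ⟨h, h1.elim le_of_lt fun h1 => h1.1.le, h2.resolve_right (by omega)⟩
  · rintro ⟨h, h1, h2⟩
    exact ⟨by omega, h, h1.lt_or_eq.imp_right fun h1 => ⟨h1, by omega⟩, Or.inl h2⟩

lemma card_peak_at (c : ℕ) {i : ℕ} (hi : i + 2 < n) :
    #{w : Fin n → Fin c | i ∈ peakSet n (Tuple.sort w)⁻¹} =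
      peakPatternCount c * c ^ (n - 3) := by
  let e : Fin 3 ↪ Fin n := ⟨fun k => ⟨i + k, by omega⟩, fun k l h => by simpa [Fin.ext_iff] using h⟩
  have := Fintype.card_subtype_comp_embedding e fun g : Fin 3 → Fin c => g 0 ≤ g 1 ∧ g 2 < g 1
  rw [Fintype.card_fin, Fintype.card_fin, Fintype.card_fin, Fintype.card_subtype] at this
  rw [peakPatternCount]
  simp only [mem_peakSet_sort_inv_iff, exists_prop_of_true hi]
  exact this

lemma sum_pk_sort_inv (c : ℕ) :
    ∑ w : Fin n → Fin c, pk n (Tuple.sort w)⁻¹ =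
      (n - 2) * (peakPatternCount c * c ^ (n - 3)) := by
  have hpk (σ : Equiv.Perm (Fin n)) :
      pk n σ = ∑ i ∈ range (n - 2), if i ∈ peakSet n σ then 1 else 0 := by
    have : peakSet n σ ⊆ range (n - 2) := filter_subset _ _
    rw [pk, ← card_filter, filter_mem_eq_inter, inter_eq_right.2 this]
  simp only [hpk]
  rw [Finset.sum_comm]
  calc ∑ i ∈ range (n - 2), ∑ w : Fin n → Fin c, (if i ∈ peakSet n (Tuple.sort w)⁻¹ then 1 else 0)
      = ∑ _i ∈ range (n - 2), peakPatternCount c * c ^ (n - 3) :=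
        sum_congr rfl fun i hi => by
          rw [← card_filter, card_peak_at c (by rw [mem_range] at hi; omega)]
    _ = _ := by rw [sum_const, card_range, smul_eq_mul]

end Peaks

/-- Starting from the ascending deck, the expected number of peaks after `t`
iterations of the `a`-handed shuffle is `(1 - a^{-2t})(n-2)/3`. -/
theorem stmt16 (n a : ℕ) (hn : 2 ≤ n) (ha : 1 ≤ a) (t : ℕ) :
    ((Pa n a) ^ t).mulVec (fun τ => (pk n τ : ℚ)) 1 =
      (1 - ((a : ℚ) ^ (2 * t))⁻¹) * ((n : ℚ) - 2) / 3 := by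
  rw [Pa_pow, Pa_mulVec_apply_one, ← Nat.cast_sum, sum_pk_sort_inv]
  set c := a ^ t
  have hc : (c : ℚ) ≠ 0 := by positivity
  have hT : 3 * (peakPatternCount c : ℚ) + c = c ^ 3 := by
    exact_mod_cast three_mul_peakPatternCount_add_self c
  rw [show (a : ℚ) ^ (2 * t) = (c : ℚ) ^ 2 by push_cast [c]; ring]
  obtain rfl | hn3 : n = 2 ∨ 3 ≤ n := by omega
  · simp
  · obtain ⟨k, rfl⟩ := Nat.exists_eq_add_of_le' hn3
    simp only [Nat.add_sub_cancel, show k + 3 - 2 = k + 1 by omega]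
    field_simp
    push_cast
    linear_combination ((k : ℚ) + 1) * (c : ℚ) ^ (k + 2) * hT
end
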